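/- Let g be a nondegenerate symmetric 4×4 matrix with inverse g^{αβ}, and let F_{αβ;μ,ν} be real numbers symmetric under α↔β and under μ↔ν. Then Σ_{λ≤σ} F_{λσ;μ,ν} U^{λσ,μν,αβ} = 0 for all α≤β (summing over μ,ν) if and only if g^{λσ}(F_{ητ;λ,σ} + F_{λσ;η,τ} − F_{λη;τ,σ} − F_{λτ;η,σ}) = 0 for all η,τ. -/

import Mathlib

open Matrix

noncomputable section

/-- The combinatorial factor `n(μν)`: 1 if `μ = ν`, 2 otherwise. -/
def nfac (μ ν : Fin 4) : ℝ := if μ = ν then 1 else 2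

/-- `ϱ = √|det g|`. -/
def rho (g : Matrix (Fin 4) (Fin 4) ℝ) : ℝ := Real.sqrt |g.det|

/-- The tensor `U^{αβ,μν,λσ}` built from a metric `g` and its inverse `g⁻¹`. -/
def Uten (g : Matrix (Fin 4) (Fin 4) ℝ) (α β μ ν l s : Fin 4) : ℝ :=
  rho g * nfac α β * nfac l s / 4 *
    (-2 * g⁻¹ α β * g⁻¹ l s * g⁻¹ μ ν
      + g⁻¹ α l * g⁻¹ β s * g⁻¹ μ ν
      + g⁻¹ β l * g⁻¹ α s * g⁻¹ μ ν
      + g⁻¹ α β * g⁻¹ l μ * g⁻¹ s ν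
      + g⁻¹ α β * g⁻¹ s μ * g⁻¹ l ν
      + g⁻¹ l s * g⁻¹ α ν * g⁻¹ β μ
      + g⁻¹ l s * g⁻¹ β ν * g⁻¹ α μ
      - g⁻¹ α ν * g⁻¹ l μ * g⁻¹ β s
      - g⁻¹ β ν * g⁻¹ l μ * g⁻¹ α s
      - g⁻¹ α ν * g⁻¹ s μ * g⁻¹ β l
      - g⁻¹ β ν * g⁻¹ s μ * g⁻¹ α l)

/-!
Unfolding `U` and using the symmetries of `F` to trade the restriction `λ ≤ σ` for the factor
`n(λσ)`, the `αβ` equation becomes `ϱ n(αβ)/4 · (2 (g⁻¹ T g⁻¹)^{αβ} − t g^{αβ}) = 0`, where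
`T_{ητ}` is the trace expression on the right-hand side and `t = g^{ητ} T_{ητ}`. This contraction
identity holds in every dimension: both sides contract `F` against cubic expressions in `g⁻¹`, and
these agree once symmetrised over the two index pairs of `F`. Lowering indices gives `2 T = t g`;
contracting with `g⁻¹` gives `2 t = 4 t`, so `t = 0` and hence `T = 0`. Only this last step uses
that the dimension is not `2`.
-/

section Contraction

variable {n : Type*} [Fintype n] (G : Matrix n n ℝ) (F : n → n → n → n → ℝ)

def traceTensor : Matrix n n ℝ :=
  of fun η τ => ∑ l, ∑ s, G l s * (F η τ l s + F l s η τ - F l η τ s - F l τ η s)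

def uKernel (α β μ ν l s : n) : ℝ :=
  -2 * G α β * G l s * G μ ν
    + G α l * G β s * G μ ν
    + G β l * G α s * G μ ν
    + G α β * G l μ * G s ν
    + G α β * G s μ * G l ν
    + G l s * G α ν * G β μ
    + G l s * G β ν * G α μ
    - G α ν * G l μ * G β s
    - G β ν * G l μ * G α s
    - G α ν * G s μ * G β l
    - G β ν * G s μ * G α l

theorem sum_mul_traceTensor (W : n → n → ℝ) :
    ∑ i, ∑ j, W i j * traceTensor G F i j = ∑ l, ∑ s, ∑ μ, ∑ ν, F l s μ ν *
      (W l s * G μ ν + G l s * W μ ν - G l ν * W s μ - G l ν * W μ s) := by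
  simp only [traceTensor, of_apply, Finset.mul_sum, mul_add, mul_sub, Finset.sum_add_distrib,
    Finset.sum_sub_distrib]
  congr 1; congr 1; congr 1
  · simp only [mul_comm, mul_left_comm]
  · rw [Finset.sum_comm_cycle]
    refine Finset.sum_congr rfl fun _ _ => ?_
    rw [Finset.sum_comm_cycle]
    simp only [mul_comm, mul_left_comm]
  · rw [Finset.sum_comm_cycle]
    simp only [mul_comm, mul_left_comm]
  · rw [Finset.sum_comm, Finset.sum_comm_cycle]
    simp only [mul_comm, mul_left_comm]

theorem traceTensor_isSymm (hF₁ : ∀ α β μ ν, F α β μ ν = F β α μ ν)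
    (hF₂ : ∀ α β μ ν, F α β μ ν = F α β ν μ) : (traceTensor G F).IsSymm := by
  ext η τ
  refine Finset.sum_congr rfl fun l _ => Finset.sum_congr rfl fun s _ => ?_
  rw [hF₁ η τ, hF₂ l s η τ]
  ring

theorem sum_mul_swap_left (hF₁ : ∀ α β μ ν, F α β μ ν = F β α μ ν)
    (K : n → n → n → n → ℝ) :
    ∑ l, ∑ s, ∑ μ, ∑ ν, F l s μ ν * K s l μ ν = ∑ l, ∑ s, ∑ μ, ∑ ν, F l s μ ν * K l s μ ν := by
  rw [Finset.sum_comm]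
  refine Finset.sum_congr rfl fun s _ => Finset.sum_congr rfl fun l _ => ?_
  simp only [hF₁ l s]

theorem sum_mul_swap_right (hF₂ : ∀ α β μ ν, F α β μ ν = F α β ν μ)
    (K : n → n → n → n → ℝ) :
    ∑ l, ∑ s, ∑ μ, ∑ ν, F l s μ ν * K l s ν μ = ∑ l, ∑ s, ∑ μ, ∑ ν, F l s μ ν * K l s μ ν := by
  refine Finset.sum_congr rfl fun l _ => Finset.sum_congr rfl fun s _ => ?_
  rw [Finset.sum_comm]
  refine Finset.sum_congr rfl fun ν _ => Finset.sum_congr rfl fun μ _ => ?_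
  rw [hF₂]

theorem sum_mul_eq_sum_mul_of_symmetrization_eq (hF₁ : ∀ α β μ ν, F α β μ ν = F β α μ ν)
    (hF₂ : ∀ α β μ ν, F α β μ ν = F α β ν μ) {K K' : n → n → n → n → ℝ}
    (h : ∀ l s μ ν, K l s μ ν + K s l μ ν + K l s ν μ + K s l ν μ
      = K' l s μ ν + K' s l μ ν + K' l s ν μ + K' s l ν μ) :
    ∑ l, ∑ s, ∑ μ, ∑ ν, F l s μ ν * K l s μ ν = ∑ l, ∑ s, ∑ μ, ∑ ν, F l s μ ν * K' l s μ ν := by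
  have four_mul (K : n → n → n → n → ℝ) : 4 * ∑ l, ∑ s, ∑ μ, ∑ ν, F l s μ ν * K l s μ ν
      = ∑ l, ∑ s, ∑ μ, ∑ ν, F l s μ ν * (K l s μ ν + K s l μ ν + K l s ν μ + K s l ν μ) := by
    simp only [mul_add, Finset.sum_add_distrib]
    rw [sum_mul_swap_left F hF₁ K, sum_mul_swap_right F hF₂ K,
      sum_mul_swap_left F hF₁ fun l s μ ν => K l s ν μ, sum_mul_swap_right F hF₂ K]
    ring
  have hsymm : ∑ l, ∑ s, ∑ μ, ∑ ν, F l s μ ν * (K l s μ ν + K s l μ ν + K l s ν μ + K s l ν μ)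
      = ∑ l, ∑ s, ∑ μ, ∑ ν, F l s μ ν * (K' l s μ ν + K' s l μ ν + K' l s ν μ + K' s l ν μ) := by
    simp only [h]
  linarith [four_mul K, four_mul K']

theorem sum_mul_uKernel (hG : G.IsSymm) (hF₁ : ∀ α β μ ν, F α β μ ν = F β α μ ν)
    (hF₂ : ∀ α β μ ν, F α β μ ν = F α β ν μ) (α β : n) :
    ∑ μ, ∑ ν, ∑ l, ∑ s, F l s μ ν * uKernel G l s μ ν α β
      = 2 * (G * traceTensor G F * G) α β
        - (∑ i, ∑ j, G i j * traceTensor G F i j) * G α β := by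
  have hW : 2 * (G * traceTensor G F * G) α β - (∑ i, ∑ j, G i j * traceTensor G F i j) * G α β
      = ∑ i, ∑ j, (2 * (G α i * G j β) - G i j * G α β) * traceTensor G F i j := by
    simp only [mul_apply, sub_mul, Finset.sum_sub_distrib, Finset.sum_mul, Finset.mul_sum]
    rw [Finset.sum_comm]
    simp only [mul_assoc, mul_comm, mul_left_comm]
  rw [hW, sum_mul_traceTensor, Finset.sum_comm_cycle]
  conv_lhs => enter [2, l]; rw [Finset.sum_comm_cycle]
  refine sum_mul_eq_sum_mul_of_symmetrization_eq F hF₁ hF₂ fun l s μ ν => ?_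
  simp only [uKernel, hG.apply l s, hG.apply μ ν, hG.apply l α, hG.apply s α, hG.apply β ν,
    hG.apply β μ, hG.apply s μ, hG.apply ν l, hG.apply l μ, hG.apply s ν]
  ring

end Contraction

theorem eq_zero_of_two_smul_inv_mul_mul_inv_eq {n : Type*} [Fintype n] [DecidableEq n]
    {A T : Matrix n n ℝ} (hA : A.IsSymm) (hdet : IsUnit A.det) (hn : Fintype.card n ≠ 2)
    (h : (2 : ℝ) • (A⁻¹ * T * A⁻¹) = (∑ i, ∑ j, A⁻¹ i j * T i j) • A⁻¹) : T = 0 := by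
  set t := ∑ i, ∑ j, A⁻¹ i j * T i j
  have hconj : A * (A⁻¹ * T * A⁻¹) * A = T := by
    rw [← Matrix.mul_assoc, ← Matrix.mul_assoc, mul_nonsing_inv A hdet, Matrix.one_mul,
      Matrix.mul_assoc, nonsing_inv_mul A hdet, Matrix.mul_one]
  have hT : (2 : ℝ) • T = t • A := calc
    (2 : ℝ) • T = A * ((2 : ℝ) • (A⁻¹ * T * A⁻¹)) * A := by
      rw [Matrix.mul_smul, Matrix.smul_mul, hconj]
    _ = t • A := by
      rw [h, Matrix.mul_smul, Matrix.smul_mul, mul_nonsing_inv A hdet, Matrix.one_mul]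
  have hcard : ∑ i, ∑ j, A⁻¹ i j * A i j = Fintype.card n := calc
    _ = trace (A⁻¹ * A) := by simp only [trace, diag, mul_apply, hA.apply]
    _ = Fintype.card n := by rw [nonsing_inv_mul A hdet, trace_one]
  have ht : t = 0 := by
    have h2t : 2 * t = t * Fintype.card n := calc
      2 * t = ∑ i, ∑ j, A⁻¹ i j * ((2 : ℝ) • T) i j := by
        simp only [t, Finset.mul_sum, Matrix.smul_apply, smul_eq_mul, mul_left_comm]
      _ = ∑ i, ∑ j, A⁻¹ i j * (t • A) i j := by rw [hT]
      _ = t * Fintype.card n := by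
        simp only [← hcard, Finset.mul_sum, Matrix.smul_apply, smul_eq_mul, mul_left_comm]
    have hn' : (Fintype.card n : ℝ) - 2 ≠ 0 := sub_ne_zero.mpr (by exact_mod_cast hn)
    have : t * ((Fintype.card n : ℝ) - 2) = 0 := by linarith
    exact (mul_eq_zero.mp this).resolve_right hn'
  rw [ht, zero_smul] at hT
  exact (smul_eq_zero.mp hT).resolve_left two_ne_zero
theorem uKernel_comm {n : Type*} {G : Matrix n n ℝ} (hG : G.IsSymm) (α β μ ν l s : n) :
    uKernel G β α μ ν l s = uKernel G α β μ ν l s := by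
  simp only [uKernel, hG.apply α β]
  ring

theorem rho_pos {g : Matrix (Fin 4) (Fin 4) ℝ} (hdet : IsUnit g.det) : 0 < rho g :=
  Real.sqrt_pos.mpr (abs_pos.mpr hdet.ne_zero)

theorem nfac_pos (μ ν : Fin 4) : 0 < nfac μ ν := by
  unfold nfac; split_ifs <;> norm_num

theorem Uten_eq (g : Matrix (Fin 4) (Fin 4) ℝ) (α β μ ν l s : Fin 4) :
    Uten g α β μ ν l s = rho g * nfac α β * nfac l s / 4 * uKernel g⁻¹ α β μ ν l s :=
  rfl

theorem sum_ite_le_nfac_mul (X : Fin 4 → Fin 4 → ℝ) (hX : ∀ l s, X l s = X s l) :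
    ∑ l, ∑ s, (if l ≤ s then nfac l s * X l s else 0) = ∑ l, ∑ s, X l s := by
  simp only [Fin.sum_univ_four, nfac]
  simp +decide only [if_true, if_false]
  rw [hX 1 0, hX 2 0, hX 2 1, hX 3 0, hX 3 1, hX 3 2]
  ring

theorem sum_ite_le_mul_Uten {g : Matrix (Fin 4) (Fin 4) ℝ} (hg : g.IsSymm)
    {F : Fin 4 → Fin 4 → Fin 4 → Fin 4 → ℝ} (hF₁ : ∀ α β μ ν, F α β μ ν = F β α μ ν)
    (hF₂ : ∀ α β μ ν, F α β μ ν = F α β ν μ) (α β : Fin 4) :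
    ∑ μ, ∑ ν, ∑ l, ∑ s, (if l ≤ s then F l s μ ν * Uten g l s μ ν α β else 0)
      = rho g * nfac α β / 4 * (2 * (g⁻¹ * traceTensor g⁻¹ F * g⁻¹) α β
        - (∑ i, ∑ j, g⁻¹ i j * traceTensor g⁻¹ F i j) * g⁻¹ α β) := by
  set c := rho g * nfac α β / 4
  have hU (μ ν l s : Fin 4) : F l s μ ν * Uten g l s μ ν α β
      = nfac l s * (c * (F l s μ ν * uKernel g⁻¹ l s μ ν α β)) := by
    rw [Uten_eq]; ring
  simp only [hU]
  rw [← sum_mul_uKernel g⁻¹ F hg.inv hF₁ hF₂, Finset.mul_sum]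
  refine Finset.sum_congr rfl fun μ _ => ?_
  rw [Finset.mul_sum]
  refine Finset.sum_congr rfl fun ν _ => ?_
  simp only [Finset.mul_sum]
  refine sum_ite_le_nfac_mul _ fun l s => ?_
  rw [hF₁, uKernel_comm hg.inv]

/-- a family `F_{αβ;μ,ν}`, symmetric under `α↔β` and `μ↔ν`,
satisfies `Σ_{λ≤σ,μ,ν} F_{λσ;μ,ν} U^{λσ,μν,αβ} = 0` for all `α ≤ β` if and
only if it satisfies the trace condition
`g^{λσ}(F_{ητ;λ,σ} + F_{λσ;η,τ} − F_{λη;τ,σ} − F_{λτ;η,σ}) = 0` for all `η,τ`. -/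
theorem homogeneous_solutions_characterization
    (g : Matrix (Fin 4) (Fin 4) ℝ)
    (hsymm : g.IsSymm) (hdet : IsUnit g.det)
    (F : Fin 4 → Fin 4 → Fin 4 → Fin 4 → ℝ)
    (hF1 : ∀ α β μ ν, F α β μ ν = F β α μ ν)
    (hF2 : ∀ α β μ ν, F α β μ ν = F α β ν μ) :
    (∀ α β : Fin 4, α ≤ β →
      (∑ μ : Fin 4, ∑ ν : Fin 4, ∑ l : Fin 4, ∑ s : Fin 4, if l ≤ s then
        F l s μ ν * Uten g l s μ ν α β else 0) = 0)
    ↔ (∀ η τ : Fin 4,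
      (∑ l : Fin 4, ∑ s : Fin 4, g⁻¹ l s *
        (F η τ l s + F l s η τ - F l η τ s - F l τ η s)) = 0) := by
  set T := traceTensor g⁻¹ F
  set M := (2 : ℝ) • (g⁻¹ * T * g⁻¹) - (∑ i, ∑ j, g⁻¹ i j * T i j) • g⁻¹
  have hsum (α β : Fin 4) :
      ∑ μ, ∑ ν, ∑ l, ∑ s, (if l ≤ s then F l s μ ν * Uten g l s μ ν α β else 0)
        = rho g * nfac α β / 4 * M α β := by
    rw [sum_ite_le_mul_Uten hsymm hF1 hF2]; rfl
  have hc (α β : Fin 4) : rho g * nfac α β / 4 ≠ 0 :=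
    (div_pos (mul_pos (rho_pos hdet) (nfac_pos α β)) four_pos).ne'
  have hM : M.IsSymm := by
    have hT : T.IsSymm := traceTensor_isSymm g⁻¹ F hF1 hF2
    refine IsSymm.sub (IsSymm.smul ?_ _) (hsymm.inv.smul _)
    simp only [IsSymm, transpose_mul, hsymm.inv.eq, hT.eq, Matrix.mul_assoc]
  constructor
  · intro h
    have hM0 : M = 0 := by
      ext α β
      wlog hαβ : α ≤ β generalizing α β
      · rw [← hM.apply]
        exact this β α (le_of_not_ge hαβ)
      exact (mul_eq_zero.mp ((hsum α β).symm.trans (h α β hαβ))).resolve_left (hc α β)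
    have hT0 : T = 0 := eq_zero_of_two_smul_inv_mul_mul_inv_eq hsymm hdet (by simp)
      (sub_eq_zero.mp hM0)
    exact fun η τ => congrFun (congrFun hT0 η) τ
  · intro h α β _
    have hT0 : T = 0 := by ext η τ; exact h η τ
    rw [hsum, show M = 0 by simp [M, hT0], Matrix.zero_apply, mul_zero]

end
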